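/- arXiv:2311.06080 — 3 statements merged into one kernel-verified Lean document; each statement's English description precedes it below -/
import Mathlib

section
/- Let M₂(a) denote the number of pairs (n,k) of positive integers with 1 ≤ k ≤ n such that the Stirling number of the second kind S(n,k) equals a. Then, as a → ∞, M₂(a) = O( log a / (log log a − log log log a) ). -/
/-- Stirling numbers of the second kind, defined by the standard recurrence:
`S(0,0) = 1`, `S(n,0) = 0` for `n ≥ 1`, `S(0,k) = 0` for `k ≥ 1`, and
`S(n+1,k+1) = S(n,k) + (k+1) * S(n,k+1)`. -/
def stirling2 : ℕ → ℕ → ℕ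
  | 0, 0 => 1
  | 0, _ + 1 => 0
  | _ + 1, 0 => 0
  | n + 1, k + 1 => stirling2 n k + (k + 1) * stirling2 n (k + 1)

/-- `M₂ a` is the number of pairs `(n, k)` with `1 ≤ k ≤ n` and `S(n, k) = a`. -/
noncomputable def M2 (a : ℕ) : ℕ :=
  Nat.card {p : ℕ × ℕ // 1 ≤ p.2 ∧ p.2 ≤ p.1 ∧ stirling2 p.1 p.2 = a}

/-!
Every solution of `S(n, k) = a ≥ 2` has `2 ≤ k < n`. For fixed `k ≥ 2` the numbers `S(n, k)` increase
strictly with `n`, and for fixed `d = n - k ≥ 1` the numbers `S(k + d, k)` increase strictly with `k`,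
so every column and every diagonal contains at most one solution. The solutions with `k ≤ K` lie in at
most `K` columns; those with `k > K` satisfy `(K + 1)^d ≤ k^d ≤ S(k + d, k) = a`, so they lie in at most
`log_{K+1} a` diagonals. Taking `K ≈ √(log a)` gives `M₂(a) ≤ √(log a) + 1 + 2 log a / log log a`,
which is `O(log a / log log a)`, and `log log a - log log log a ≤ log log a`.
-/

open Filter Asymptotics

theorem stirling2_eq_stirlingSecond : ∀ n k, stirling2 n k = Nat.stirlingSecond n k
  | 0, 0 | 0, _ + 1 | _ + 1, 0 => rfl
  | n + 1, k + 1 => by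
    rw [stirling2, Nat.stirlingSecond_succ_succ, stirling2_eq_stirlingSecond n k,
      stirling2_eq_stirlingSecond n (k + 1), add_comm]

namespace Nat

theorem pow_le_stirlingSecond_add (k d : ℕ) : k ^ d ≤ stirlingSecond (k + d) k := by
  induction d with
  | zero => simp [stirlingSecond_self]
  | succ d ih =>
    rcases k with _ | k
    · simp
    · rw [← add_assoc, stirlingSecond_succ_left _ _ k.succ_ne_zero, pow_succ']
      exact (Nat.mul_le_mul_left _ ih).trans (Nat.le_add_right _ _)

theorem stirlingSecond_pos {n k : ℕ} (hk : 1 ≤ k) (hkn : k ≤ n) : 0 < stirlingSecond n k := by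
  obtain ⟨d, rfl⟩ := exists_add_of_le hkn
  exact (pow_pos hk d).trans_le (pow_le_stirlingSecond_add k d)

theorem strictMono_stirlingSecond_column {k : ℕ} (hk : 2 ≤ k) :
    StrictMono fun d => stirlingSecond (k + d) k := by
  refine strictMono_nat_of_lt_succ fun d => ?_
  have hpos := stirlingSecond_pos (n := k + d) (k := k) (by omega) (by omega)
  rw [← add_assoc, stirlingSecond_succ_left _ _ (by omega)]
  nlinarith

theorem strictMono_stirlingSecond_diagonal {d : ℕ} (hd : 1 ≤ d) :
    StrictMono fun k => stirlingSecond (k + d) k := by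
  refine strictMono_nat_of_lt_succ fun k => ?_
  have hpos := stirlingSecond_pos (n := k + d) (k := k + 1) (by omega) (by omega)
  rw [show k + 1 + d = k + d + 1 by omega, stirlingSecond_succ_succ]
  exact lt_add_of_pos_left _ (Nat.mul_pos k.succ_pos hpos)

theorem two_le_and_lt_of_stirlingSecond_eq {n k a : ℕ} (ha : 2 ≤ a) (hk : 1 ≤ k) (hkn : k ≤ n)
    (h : stirlingSecond n k = a) : 2 ≤ k ∧ k < n := by
  constructor
  · by_contra! hk2
    rw [show k = 1 by omega, show n = n - 1 + 1 by omega, stirlingSecond_one_right] at h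
    omega
  · by_contra! hnk
    rw [show n = k by omega, stirlingSecond_self] at h
    omega

end Nat

def stirlingSecondFiber (a : ℕ) : Set (ℕ × ℕ) :=
  {p | 1 ≤ p.2 ∧ p.2 ≤ p.1 ∧ Nat.stirlingSecond p.1 p.2 = a}

theorem M2_eq_ncard (a : ℕ) : M2 a = (stirlingSecondFiber a).ncard := by
  simp only [M2, stirling2_eq_stirlingSecond]
  exact Nat.card_coe_set_eq _

theorem two_le_and_lt_of_mem_stirlingSecondFiber {a : ℕ} (ha : 2 ≤ a) {p : ℕ × ℕ}
    (hp : p ∈ stirlingSecondFiber a) : 2 ≤ p.2 ∧ p.2 < p.1 :=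
  Nat.two_le_and_lt_of_stirlingSecond_eq ha hp.1 hp.2.1 hp.2.2

theorem ncard_stirlingSecondFiber_snd_le {a : ℕ} (ha : 2 ≤ a) (K : ℕ) :
    {p ∈ stirlingSecondFiber a | p.2 ≤ K}.ncard ≤ K := by
  calc _ ≤ (Set.Icc 1 K).ncard := by
        refine Set.ncard_le_ncard_of_injOn Prod.snd (fun p hp => ⟨hp.1.1, hp.2⟩) ?_
        rintro ⟨n, k⟩ ⟨hp, -⟩ ⟨m, j⟩ ⟨⟨-, hkm : j ≤ m, hm⟩, -⟩ (rfl : k = j)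
        have hk := (two_le_and_lt_of_mem_stirlingSecondFiber ha hp).1
        obtain ⟨-, hkn : k ≤ n, hn⟩ := hp
        have hd : n - k = m - k := (Nat.strictMono_stirlingSecond_column hk).injective <| by
          rw [Nat.add_sub_cancel' hkn, Nat.add_sub_cancel' hkm, hn, hm]
        simp only [Prod.mk.injEq, and_true]
        omega
    _ = K := by simp

theorem ncard_stirlingSecondFiber_lt_snd_le {a K : ℕ} (ha : 2 ≤ a) (hK : 1 ≤ K) :
    {p ∈ stirlingSecondFiber a | K < p.2}.ncard ≤ Nat.log (K + 1) a := by
  calc _ ≤ (Set.Icc 1 (Nat.log (K + 1) a)).ncard := by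
        refine Set.ncard_le_ncard_of_injOn (fun p => p.1 - p.2) ?_ ?_
        · rintro ⟨n, k⟩ ⟨hp, hKk : K < k⟩
          have hkn : k < n := (two_le_and_lt_of_mem_stirlingSecondFiber ha hp).2
          obtain ⟨-, -, hn⟩ := hp
          refine ⟨by omega, Nat.le_log_of_pow_le (by omega) ?_⟩
          calc (K + 1) ^ (n - k) ≤ k ^ (n - k) := Nat.pow_le_pow_left hKk _
            _ ≤ Nat.stirlingSecond (k + (n - k)) k := Nat.pow_le_stirlingSecond_add _ _
            _ = a := by rw [Nat.add_sub_cancel' hkn.le, hn]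
        · rintro ⟨n, k⟩ ⟨hp, -⟩ ⟨m, j⟩ ⟨⟨-, hjm : j ≤ m, hm⟩, -⟩ (hd : n - k = m - j)
          have hkn : k < n := (two_le_and_lt_of_mem_stirlingSecondFiber ha hp).2
          obtain ⟨-, -, hn⟩ := hp
          obtain rfl : k = j := (Nat.strictMono_stirlingSecond_diagonal (d := n - k)
            (by omega)).injective <| by
              rw [Nat.add_sub_cancel' hkn.le, hd, Nat.add_sub_cancel' hjm, hn, hm]
          simp only [Prod.mk.injEq, and_true]
          omega
    _ = _ := by simp

theorem M2_le {a K : ℕ} (ha : 2 ≤ a) (hK : 1 ≤ K) : M2 a ≤ K + Nat.log (K + 1) a :=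
  calc M2 a = {p ∈ stirlingSecondFiber a | p.2 ≤ K ∨ K < p.2}.ncard := by
        simp only [M2_eq_ncard, le_or_gt, Set.sep_true]
    _ ≤ _ := by rw [Set.sep_or]; exact Set.ncard_union_le _ _
    _ ≤ _ := add_le_add (ncard_stirlingSecondFiber_snd_le ha K)
        (ncard_stirlingSecondFiber_lt_snd_le ha hK)

theorem M2_le_sqrt_log {a : ℕ} (ha : 1 < Real.log a) :
    (M2 a : ℝ) ≤ √(Real.log a) + 1 + 2 * (Real.log a / Real.log (Real.log a)) := by
  have ha2 : 2 ≤ a := by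
    by_contra! h
    interval_cases a <;> norm_num at ha
  set x := Real.log a
  set K := ⌊√x⌋₊ + 1
  have hsx : 0 < √x := Real.sqrt_pos.2 (by linarith)
  have hKx : √x < K := by exact_mod_cast Nat.lt_floor_add_one √x
  have hlogK : Real.log x / 2 ≤ Real.log (K + 1) := by
    rw [← Real.log_sqrt (by linarith)]
    exact Real.log_le_log hsx (by linarith)
  have hlogx : 0 < Real.log x := Real.log_pos ha
  calc (M2 a : ℝ) ≤ K + Nat.log (K + 1) a := by exact_mod_cast M2_le ha2 (by omega)
    _ ≤ (√x + 1) + x / Real.log (K + 1) := by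
      gcongr
      · push_cast [K]
        gcongr
        exact Nat.floor_le hsx.le
      · simpa [Real.logb] using Real.natLog_le_logb a (K + 1)
    _ ≤ √x + 1 + x / (Real.log x / 2) := by gcongr
    _ = √x + 1 + 2 * (x / Real.log x) := by ring

theorem sqrt_add_one_add_two_mul_div_log_le {x : ℝ} (hx0 : 0 < x) (hx : 1 ≤ Real.log x) :
    √x + 1 + 2 * (x / Real.log x) ≤ 5 * (x / (Real.log x - Real.log (Real.log x))) := by
  have hlog_le_sqrt : Real.log x ≤ 2 * √x := by
    have := Real.log_le_rpow_div hx0.le (ε := 1 / 2) (by norm_num)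
    rw [← Real.sqrt_eq_rpow] at this
    linarith
  have hlog_le : Real.log x ≤ x := (Real.log_le_sub_one_of_pos hx0).trans (by linarith)
  have hloglog : Real.log (Real.log x) ≤ Real.log x - 1 :=
    Real.log_le_sub_one_of_pos (by linarith)
  have hsqrt : √x ≤ 2 * (x / Real.log x) := by
    rw [mul_div_assoc', le_div_iff₀ (by linarith)]
    nlinarith [Real.mul_self_sqrt hx0.le, Real.sqrt_nonneg x]
  have hone : 1 ≤ x / Real.log x := (one_le_div (by linarith)).2 hlog_le
  calc √x + 1 + 2 * (x / Real.log x) ≤ 5 * (x / Real.log x) := by linarith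
    _ ≤ 5 * (x / (Real.log x - Real.log (Real.log x))) := by
        gcongr 5 * ?_
        exact div_le_div_of_nonneg_left hx0.le (by linarith)
          (by linarith [Real.log_nonneg hx])

/-- As `a → ∞`, `M₂(a) = O(log a / (log log a − log log log a))`. -/
theorem M2_isBigO :
    (fun a : ℕ => (M2 a : ℝ)) =O[Filter.atTop]
      fun a : ℕ =>
        Real.log a / (Real.log (Real.log a) - Real.log (Real.log (Real.log a))) := by
  have hlog : Tendsto (fun a : ℕ => Real.log a) atTop atTop :=
    Real.tendsto_log_atTop.comp tendsto_natCast_atTop_atTop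
  refine IsBigO.of_bound 5 ?_
  filter_upwards [(Real.tendsto_log_atTop.comp hlog).eventually_ge_atTop 1] with a hloglog
  rw [Function.comp_apply] at hloglog
  have hlog1 : 1 < Real.log a := by
    by_contra! h
    linarith [Real.log_nonpos (Real.log_natCast_nonneg a) h]
  calc ‖(M2 a : ℝ)‖ = M2 a := Real.norm_natCast _
    _ ≤ _ := (M2_le_sqrt_log hlog1).trans
        (sqrt_add_one_add_two_mul_div_log_le (by linarith) hloglog)
    _ ≤ _ := by gcongr; exact Real.le_norm_self _
end

section
/- Let M₂(a) denote the number of pairs (n,k) of positive integers with 1 ≤ k ≤ n such that the Stirling number of the second kind S(n,k) equals a. For every integer a ≥ 2 and every positive integer b such that (b/2)^b > a, one has M₂(a) ≤ 2b. -/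
lemma stirling2_eq_zero : ∀ n k : ℕ, n < k → stirling2 n k = 0
  | 0, 0, h => by omega
  | 0, k + 1, _ => rfl
  | n + 1, 0, h => by omega
  | n + 1, k + 1, h => by
    rw [stirling2, stirling2_eq_zero n k (by omega), stirling2_eq_zero n (k+1) (by omega)]
    omega

lemma stirling2_self : ∀ n : ℕ, stirling2 n n = 1
  | 0 => rfl
  | n + 1 => by
    rw [stirling2, stirling2_self n, stirling2_eq_zero n (n+1) (by omega)]
    omega

lemma stirling2_one : ∀ n : ℕ, 1 ≤ n → stirling2 n 1 = 1
  | 1, _ => rfl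
  | n + 2, _ => by
    show stirling2 (n+1) 0 + 1 * stirling2 (n+1) 1 = 1
    rw [stirling2, stirling2_one (n+1) (by omega)]

lemma stirling2_pos : ∀ n k : ℕ, k ≤ n → 0 < stirling2 (n + 1) (k + 1)
  | 0, 0, _ => by norm_num [stirling2]
  | n + 1, 0, _ => by
    show 0 < stirling2 (n+1) 0 + 1 * stirling2 (n+1) 1
    have := stirling2_pos n 0 (by omega)
    norm_num at this ⊢
    omega
  | n + 1, k + 1, h => by
    show 0 < stirling2 (n+1) (k+1) + (k+2) * stirling2 (n+1) (k+2)
    have := stirling2_pos n k (by omega)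
    omega

lemma stirling2_pos' (n k : ℕ) (h1 : 1 ≤ k) (h2 : k ≤ n) : 0 < stirling2 n k := by
  obtain ⟨n, rfl⟩ : ∃ m, n = m + 1 := ⟨n - 1, by omega⟩
  obtain ⟨k, rfl⟩ : ∃ m, k = m + 1 := ⟨k - 1, by omega⟩
  exact stirling2_pos n k (by omega)

lemma stirling2_pow_le : ∀ n k : ℕ, 1 ≤ k → k ≤ n → k ^ (n - k) ≤ stirling2 n k
  | 0, k, h1, h2 => by omega
  | n + 1, k, h1, h2 => by
    rcases eq_or_lt_of_le h2 with rfl | hlt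
    · simp [stirling2_self]
    · obtain ⟨j, rfl⟩ : ∃ m, k = m + 1 := ⟨k - 1, by omega⟩
      have hk : j + 1 ≤ n := by omega
      have ih := stirling2_pow_le n (j + 1) h1 hk
      have e : n + 1 - (j + 1) = (n - (j + 1)) + 1 := by omega
      rw [stirling2, e, pow_succ]
      calc (j+1) ^ (n - (j+1)) * (j+1) = (j+1) * (j+1) ^ (n - (j+1)) := by ring
        _ ≤ (j+1) * stirling2 n (j+1) := Nat.mul_le_mul_left _ ih
        _ ≤ _ := Nat.le_add_left _ _

lemma stirling2_lt_succ_n (n k : ℕ) (h1 : 2 ≤ k) (h2 : k ≤ n) :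
    stirling2 n k < stirling2 (n + 1) k := by
  obtain ⟨j, rfl⟩ : ∃ m, k = m + 1 := ⟨k - 1, by omega⟩
  rw [stirling2]
  have hp := stirling2_pos' n (j+1) (by omega) h2
  have : 1 * stirling2 n (j+1) < (j+1) * stirling2 n (j+1) :=
    Nat.mul_lt_mul_of_lt_of_le (by omega) le_rfl hp
  omega

lemma stirling2_strictMonoOn_n (k : ℕ) (hk : 2 ≤ k) :
    ∀ n n' : ℕ, k ≤ n → n < n' → stirling2 n k < stirling2 n' k := by
  intro n n' hn hlt
  induction n' with
  | zero => omega
  | succ m ih =>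
    rcases Nat.lt_or_ge n m with h | h
    · exact (ih h).trans (stirling2_lt_succ_n m k hk (by omega))
    · have : n = m := by omega
      subst this
      exact stirling2_lt_succ_n n k hk hn

lemma stirling2_lt_succ_diag (k d : ℕ) (hd : 1 ≤ d) :
    stirling2 (k + d) k < stirling2 (k + 1 + d) (k + 1) := by
  have e2 : stirling2 (k + 1 + d) (k + 1)
      = stirling2 (k + d) k + (k+1) * stirling2 (k + d) (k+1) := by
    have e : k + 1 + d = (k + d) + 1 := by omega
    rw [e, stirling2]
  rw [e2]
  have hp := stirling2_pos' (k + d) (k + 1) (by omega) (by omega)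
  have : 0 < (k+1) * stirling2 (k+d) (k+1) := Nat.mul_pos (by omega) hp
  omega

lemma stirling2_strictMono_diag (d : ℕ) (hd : 1 ≤ d) :
    ∀ k k' : ℕ, k < k' → stirling2 (k + d) k < stirling2 (k' + d) k' := by
  intro k k' hlt
  induction k' with
  | zero => omega
  | succ m ih =>
    rcases Nat.lt_or_ge k m with h | h
    · exact (ih h).trans (stirling2_lt_succ_diag m d hd)
    · have : k = m := by omega
      subst this
      exact stirling2_lt_succ_diag k d hd

lemma aux_k2 (a n k : ℕ) (ha : 2 ≤ a) (h1 : 1 ≤ k) (h2 : k ≤ n)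
    (h3 : stirling2 n k = a) : 2 ≤ k := by
  by_contra hc
  have : k = 1 := by omega
  subst this
  rw [stirling2_one n h2] at h3
  omega

lemma aux_kn (a n k : ℕ) (ha : 2 ≤ a) (h1 : 1 ≤ k) (h2 : k ≤ n)
    (h3 : stirling2 n k = a) : k < n := by
  rcases eq_or_lt_of_le h2 with rfl | hlt
  · rw [stirling2_self] at h3; omega
  · exact hlt

lemma aux_key (a b n k : ℕ) (hab : a < (b + 1) ^ (b + 1)) (h1 : 1 ≤ k) (h2 : k ≤ n)
    (h3 : stirling2 n k = a) (hd : b < n - k) : k ≤ b := by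
  by_contra hc
  push_neg at hc
  have hle : (b + 1) ^ (b + 1) ≤ k ^ (n - k) :=
    (Nat.pow_le_pow_left (by omega) _).trans (Nat.pow_le_pow_right (by omega) (by omega))
  have := stirling2_pow_le n k (by omega) h2
  omega

/-- If `a ≥ 2` and `b ≥ 1` satisfies `(b/2)^b > a`, then `M₂(a) ≤ 2b`. -/
theorem M2_le_of_pow_gt (a b : ℕ) (ha : 2 ≤ a) (hb : 1 ≤ b)
    (h : (a : ℝ) < ((b : ℝ) / 2) ^ b) : M2 a ≤ 2 * b := by
  have hreal : ((b : ℝ) / 2) ^ b ≤ ((b : ℝ) + 1) ^ (b + 1) := by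
    calc ((b : ℝ) / 2) ^ b ≤ ((b : ℝ) + 1) ^ b := by
          apply pow_le_pow_left₀ (by positivity) (by linarith)
      _ ≤ ((b : ℝ) + 1) ^ (b + 1) := by
          apply pow_le_pow_right₀ (by linarith) (by omega)
  have hab : a < (b + 1) ^ (b + 1) := by
    have h2 : (a : ℝ) < ((b : ℝ) + 1) ^ (b + 1) := lt_of_lt_of_le h hreal
    have h3 : ((b : ℝ) + 1) = ((b + 1 : ℕ) : ℝ) := by push_cast; ring
    rw [h3] at h2
    exact_mod_cast h2
  set T := {p : ℕ × ℕ // 1 ≤ p.2 ∧ p.2 ≤ p.1 ∧ stirling2 p.1 p.2 = a} with hT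
  classical
  set f : T → Fin b ⊕ Fin b := fun p =>
    if hd : p.1.1 - p.1.2 ≤ b then
      Sum.inl ⟨p.1.1 - p.1.2 - 1, by
        have := aux_kn a p.1.1 p.1.2 ha p.2.1 p.2.2.1 p.2.2.2; omega⟩
    else
      Sum.inr ⟨p.1.2 - 1, by
        have h1 := aux_key a b p.1.1 p.1.2 hab p.2.1 p.2.2.1 p.2.2.2 (by omega)
        have h2 := aux_k2 a p.1.1 p.1.2 ha p.2.1 p.2.2.1 p.2.2.2
        omega⟩
    with hf
  have hinj : Function.Injective f := by
    rintro ⟨⟨n, k⟩, hp1, hp2, hp3⟩ ⟨⟨m, l⟩, hq1, hq2, hq3⟩ hpq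
    dsimp only at hp1 hp2 hp3 hq1 hq2 hq3
    have hknp := aux_kn a n k ha hp1 hp2 hp3
    have hknq := aux_kn a m l ha hq1 hq2 hq3
    have hk2p := aux_k2 a n k ha hp1 hp2 hp3
    have hk2q := aux_k2 a m l ha hq1 hq2 hq3
    simp only [hf] at hpq
    split_ifs at hpq with h1 h2 h2
    · -- both small diagonal: same diagonal
      simp only [Sum.inl.injEq, Fin.mk.injEq] at hpq
      have hdeq : n - k = m - l := by omega
      set d := n - k with hdd
      have hn : n = k + d := by omega
      have hm : m = l + d := by omega
      have hkl : k = l := by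
        by_contra hne
        rcases Nat.lt_or_ge k l with hlt | hge
        · have := stirling2_strictMono_diag d (by omega) k l hlt
          rw [← hn, ← hm, hp3, hq3] at this
          omega
        · have hlt : l < k := by omega
          have := stirling2_strictMono_diag d (by omega) l k hlt
          rw [← hn, ← hm, hp3, hq3] at this
          omega
      subst hkl
      have : n = m := by omega
      subst this
      rfl
    · -- both large diagonal: same k
      simp only [Sum.inr.injEq, Fin.mk.injEq] at hpq
      have hkl : k = l := by omega
      subst hkl
      have hnm : n = m := by
        by_contra hne
        rcases Nat.lt_or_ge n m with hlt | hge
        · have := stirling2_strictMonoOn_n k hk2p n m (by omega) hlt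
          rw [hp3, hq3] at this; omega
        · have hlt : m < n := by omega
          have := stirling2_strictMonoOn_n k hk2p m n (by omega) hlt
          rw [hp3, hq3] at this; omega
      subst hnm
      rfl
  calc M2 a = Nat.card T := rfl
    _ ≤ Nat.card (Fin b ⊕ Fin b) := Nat.card_le_card_of_injective f hinj
    _ = 2 * b := by simp [Nat.card_sum]; omega
end

section
/- Fix an integer k ≥ 3 with k ≠ 4. Assume the ABC conjecture: for every ε > 0 there exists a constant C(ε) > 0 such that whenever A, B, C are nonzero pairwise coprime integers with A + B = C, then max(|A|,|B|,|C|) < C(ε)·rad(A·B·C)^{1+ε}. Then the equation 8(k−2)·n! + (k−4)² = (2(k−2)x + (4−k))², equivalently n! = x((k−2)x − k + 4)/2, has only finitely many solutions in integers n > 1 and x > 1. -/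
/-- The radical of a nonzero integer: the product of its distinct prime factors. -/
def intRadical (m : ℤ) : ℕ := m.natAbs.primeFactors.prod id

section RadLemmas

lemma natRad_dvd (m : ℕ) : m.primeFactors.prod id ∣ m := by
  simpa using Nat.prod_primeFactors_dvd m

lemma natRad_le_self {m : ℕ} (hm : m ≠ 0) : m.primeFactors.prod id ≤ m :=
  Nat.le_of_dvd (Nat.pos_of_ne_zero hm) (natRad_dvd m)

lemma natRad_le_of_dvd {a b : ℕ} (h : a ∣ b) (hb : b ≠ 0) :
    a.primeFactors.prod id ≤ b.primeFactors.prod id :=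
  Finset.prod_le_prod_of_subset_of_one_le' (Nat.primeFactors_mono h hb)
    (fun p hp _ => (Nat.prime_of_mem_primeFactors hp).one_lt.le)

lemma natRad_prod_union_le (s t : Finset ℕ)
    (hs : ∀ p ∈ s, 1 ≤ p) (ht : ∀ p ∈ t, 1 ≤ p) :
    (s ∪ t).prod id ≤ s.prod id * t.prod id := by
  have hdisj : Disjoint s (t \ s) := Finset.disjoint_sdiff
  have hrw : s ∪ t = s ∪ (t \ s) := by
    rw [Finset.union_sdiff_self_eq_union]
  rw [hrw, Finset.prod_union hdisj]
  exact Nat.mul_le_mul_left _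
    (Finset.prod_le_prod_of_subset_of_one_le' (Finset.sdiff_subset)
      (fun p hp _ => ht p hp))

lemma natRad_mul_le {a b : ℕ} (ha : a ≠ 0) (hb : b ≠ 0) :
    (a * b).primeFactors.prod id ≤ a.primeFactors.prod id * b.primeFactors.prod id := by
  rw [Nat.primeFactors_mul ha hb]
  exact natRad_prod_union_le _ _
    (fun p hp => (Nat.prime_of_mem_primeFactors hp).one_lt.le)
    (fun p hp => (Nat.prime_of_mem_primeFactors hp).one_lt.le)

lemma natRad_sq (m : ℕ) (hm : m ≠ 0) :
    (m ^ 2).primeFactors.prod id = m.primeFactors.prod id := by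
  rw [Nat.primeFactors_pow m (by norm_num : (2:ℕ) ≠ 0)]

lemma natRad_factorial_le (n : ℕ) : (n.factorial).primeFactors.prod id ≤ 4 ^ n := by
  have hsub : (n.factorial).primeFactors ⊆
      Finset.filter Nat.Prime (Finset.range (n + 1)) := by
    intro p hp
    have hprime := Nat.prime_of_mem_primeFactors hp
    have hdvd := Nat.dvd_of_mem_primeFactors hp
    have hle : p ≤ n := (Nat.Prime.dvd_factorial hprime).mp hdvd
    simp [Finset.mem_filter, Finset.mem_range, Nat.lt_succ_of_le hle, hprime]
  calc (n.factorial).primeFactors.prod id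
      ≤ (Finset.filter Nat.Prime (Finset.range (n + 1))).prod id :=
        Finset.prod_le_prod_of_subset_of_one_le' hsub
          (fun p hp _ => ((Finset.mem_filter.mp hp).2).one_lt.le)
    _ = primorial n := by rw [primorial]; rfl
    _ ≤ 4 ^ n := primorial_le_4_pow n

end RadLemmas

/-- Assume the ABC conjecture. Then, for every fixed integer `k ≥ 3` with `k ≠ 4`,
the equation `8(k−2)·n! + (k−4)² = (2(k−2)x + (4−k))²` (equivalently
`n! = x((k−2)x − k + 4)/2`) has only finitely many solutions in integers
`n > 1`, `x > 1`. -/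
theorem factorial_polygonal_finite (k : ℤ) (hk : 3 ≤ k) (hk4 : k ≠ 4)
    (abc : ∀ ε : ℝ, 0 < ε → ∃ C : ℝ, 0 < C ∧
      ∀ A B c : ℤ, A ≠ 0 → B ≠ 0 → c ≠ 0 →
        IsCoprime A B → IsCoprime A c → IsCoprime B c → A + B = c →
        max |(A : ℝ)| (max |(B : ℝ)| |(c : ℝ)|) <
          C * (intRadical (A * B * c) : ℝ) ^ (1 + ε)) :
    {p : ℕ × ℕ | 1 < p.1 ∧ 1 < p.2 ∧
      8 * (k - 2) * (p.1.factorial : ℤ) + (k - 4) ^ 2 =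
        (2 * (k - 2) * (p.2 : ℤ) + (4 - k)) ^ 2}.Finite := by
  obtain ⟨C, hC, habc⟩ := abc (1/2) (by norm_num)
  -- constants
  set na : ℕ := ((k - 4) ^ 2).natAbs with hna_def
  set m8 : ℕ := (8 * (k - 2)).natAbs with hm8_def
  have hna_cast : ((na : ℤ)) = (k - 4) ^ 2 := Int.natAbs_of_nonneg (sq_nonneg _)
  have hm8_cast : ((m8 : ℤ)) = 8 * (k - 2) := Int.natAbs_of_nonneg (by linarith)
  have hna_pos : 0 < na := by
    have : (k - 4) ^ 2 ≠ 0 := pow_ne_zero _ (sub_ne_zero.mpr hk4)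
    positivity
  have hm8_pos : 0 < m8 := by
    have : (8 : ℤ) * (k - 2) ≠ 0 := by
      have : (0:ℤ) < 8 * (k - 2) := by linarith
      exact this.ne'
    positivity
  set Kc : ℕ := m8 + na with hKc_def
  set E : ℝ := ((na : ℝ) ^ 5 * C ^ 2 * (m8 : ℝ)) ^ 2 * (Kc : ℝ) ^ 3 with hE_def
  have hE_pos : 0 < E := by
    have h1 : (0:ℝ) < (na : ℝ) := by exact_mod_cast hna_pos
    have h2 : (0:ℝ) < (m8 : ℝ) := by exact_mod_cast hm8_pos
    have h3 : (0:ℝ) < (Kc : ℝ) := by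
      have : 0 < Kc := by omega
      exact_mod_cast this
    positivity
  -- the key estimate: any solution satisfies n! ≤ E * 4096 ^ n
  have key : ∀ n x : ℕ, 1 < n → 1 < x →
      8 * (k - 2) * (n.factorial : ℤ) + (k - 4) ^ 2 =
        (2 * (k - 2) * (x : ℤ) + (4 - k)) ^ 2 →
      (n.factorial : ℝ) ≤ E * 4096 ^ n := by
    intro n x hn hx heq
    set y : ℤ := 2 * (k - 2) * (x : ℤ) + (4 - k) with hy_def
    have hx2 : (2 : ℤ) ≤ (x : ℤ) := by exact_mod_cast hx
    have hy_pos : 0 < y := by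
      linarith [mul_le_mul_of_nonneg_left hx2 (show (0:ℤ) ≤ 2 * (k - 2) by linarith)]
    set Y : ℕ := y.natAbs with hY_def
    have hY_cast : ((Y : ℤ)) = y := Int.natAbs_of_nonneg hy_pos.le
    have hY_pos : 0 < Y := by
      rw [hY_def]; exact Int.natAbs_pos.mpr hy_pos.ne'
    -- natural-number version of the equation
    have h_eq_nat : na + m8 * n.factorial = Y ^ 2 := by
      have : ((na + m8 * n.factorial : ℕ) : ℤ) = ((Y ^ 2 : ℕ) : ℤ) := by
        push_cast
        rw [hna_cast, hm8_cast, hY_cast]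
        linarith [heq]
      exact_mod_cast this
    -- gcd and the coprime parts
    set g : ℕ := Nat.gcd na (Nat.gcd (m8 * n.factorial) (Y ^ 2)) with hg_def
    have hg_pos : 0 < g := Nat.gcd_pos_of_pos_left _ hna_pos
    have hga : g ∣ na := Nat.gcd_dvd_left _ _
    have hgb : g ∣ m8 * n.factorial :=
      (Nat.gcd_dvd_right na _).trans (Nat.gcd_dvd_left _ _)
    have hgc : g ∣ Y ^ 2 := (Nat.gcd_dvd_right na _).trans (Nat.gcd_dvd_right _ _)
    obtain ⟨a', ha'⟩ := hga
    obtain ⟨b', hb'⟩ := hgb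
    obtain ⟨c', hc'⟩ := hgc
    have ha'_pos : 0 < a' := by
      rcases Nat.eq_zero_or_pos a' with h | h
      · exfalso; rw [h, mul_zero] at ha'; omega
      · exact h
    have hb'_pos : 0 < b' := by
      have : 0 < m8 * n.factorial := Nat.mul_pos hm8_pos n.factorial_pos
      rcases Nat.eq_zero_or_pos b' with h | h
      · exfalso; rw [h, mul_zero] at hb'; omega
      · exact h
    have hc'_pos : 0 < c' := by
      have : 0 < Y ^ 2 := by positivity
      rcases Nat.eq_zero_or_pos c' with h | h
      · exfalso; rw [h, mul_zero] at hc'; omega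
      · exact h
    have hsum' : a' + b' = c' := by
      have h1 : g * (a' + b') = g * c' := by
        rw [Nat.mul_add, ← ha', ← hb', ← hc']; exact h_eq_nat
      exact Nat.eq_of_mul_eq_mul_left hg_pos h1
    have htriple : Nat.gcd a' (Nat.gcd b' c') = 1 := by
      have h1 : g * Nat.gcd a' (Nat.gcd b' c') = g * 1 := by
        rw [mul_one, hg_def]
        conv_lhs => rw [← Nat.gcd_mul_left, ← Nat.gcd_mul_left, ← ha', ← hb', ← hc']
      exact Nat.eq_of_mul_eq_mul_left hg_pos h1
    have hab : Nat.Coprime a' b' := by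
      have hd : Nat.gcd a' b' ∣ 1 := by
        rw [← htriple]
        exact Nat.dvd_gcd (Nat.gcd_dvd_left _ _)
          (Nat.dvd_gcd (Nat.gcd_dvd_right _ _)
            (hsum' ▸ Nat.dvd_add (Nat.gcd_dvd_left _ _) (Nat.gcd_dvd_right _ _)))
      exact Nat.dvd_one.mp hd
    have hac : Nat.Coprime a' c' := by
      have hb_eq : c' - a' = b' := by omega
      have hd : Nat.gcd a' c' ∣ 1 := by
        rw [← htriple]
        refine Nat.dvd_gcd (Nat.gcd_dvd_left _ _) (Nat.dvd_gcd ?_ (Nat.gcd_dvd_right _ _))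
        rw [← hb_eq]
        exact Nat.dvd_sub (Nat.gcd_dvd_right _ _) (Nat.gcd_dvd_left _ _)
      exact Nat.dvd_one.mp hd
    have hbc : Nat.Coprime b' c' := by
      have ha_eq : c' - b' = a' := by omega
      have hd : Nat.gcd b' c' ∣ 1 := by
        rw [← htriple]
        refine Nat.dvd_gcd ?_ (Nat.dvd_gcd (Nat.gcd_dvd_left _ _) (Nat.gcd_dvd_right _ _))
        rw [← ha_eq]
        exact Nat.dvd_sub (Nat.gcd_dvd_right _ _) (Nat.gcd_dvd_left _ _)
      exact Nat.dvd_one.mp hd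
    -- apply abc
    have hmax := habc (a' : ℤ) (b' : ℤ) (c' : ℤ)
      (by exact_mod_cast ha'_pos.ne')
      (by exact_mod_cast hb'_pos.ne')
      (by exact_mod_cast hc'_pos.ne')
      (Nat.isCoprime_iff_coprime.mpr hab)
      (Nat.isCoprime_iff_coprime.mpr hac)
      (Nat.isCoprime_iff_coprime.mpr hbc)
      (by exact_mod_cast hsum')
    -- bound on the radical
    set R : ℕ := intRadical ((a' : ℤ) * (b' : ℤ) * (c' : ℤ)) with hR_def
    have hR_eq : R = (a' * b' * c').primeFactors.prod id := by
      rw [hR_def]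
      simp [intRadical, Int.natAbs_mul]
    have hQ_bound : R ≤ na * (m8 * 4 ^ n) * Y := by
      have habc_ne : a' * b' * c' ≠ 0 := by positivity
      have hnbc_ne : na * (m8 * n.factorial) * Y ^ 2 ≠ 0 := by positivity
      have hdvd : a' * b' * c' ∣ na * (m8 * n.factorial) * Y ^ 2 := by
        exact mul_dvd_mul (mul_dvd_mul ⟨g, by rw [ha']; ring⟩ ⟨g, by rw [hb']; ring⟩)
          ⟨g, by rw [hc']; ring⟩
      calc R = (a' * b' * c').primeFactors.prod id := hR_eq
        _ ≤ (na * (m8 * n.factorial) * Y ^ 2).primeFactors.prod id :=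
            natRad_le_of_dvd hdvd hnbc_ne
        _ ≤ (na * (m8 * n.factorial)).primeFactors.prod id *
              (Y ^ 2).primeFactors.prod id := by
            exact natRad_mul_le (by positivity) (by positivity)
        _ ≤ (na.primeFactors.prod id * (m8 * n.factorial).primeFactors.prod id) *
              (Y ^ 2).primeFactors.prod id := by
            exact Nat.mul_le_mul_right _ (natRad_mul_le hna_pos.ne' (by positivity))
        _ ≤ (na * ((m8.primeFactors.prod id) * (n.factorial.primeFactors.prod id))) *
              (Y ^ 2).primeFactors.prod id := by
            exact Nat.mul_le_mul_right _
              (Nat.mul_le_mul (natRad_le_self hna_pos.ne')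
                (natRad_mul_le hm8_pos.ne' n.factorial_pos.ne'))
        _ ≤ (na * (m8 * 4 ^ n)) * Y := by
            refine Nat.mul_le_mul (Nat.mul_le_mul_left _
              (Nat.mul_le_mul (natRad_le_self hm8_pos.ne') (natRad_factorial_le n))) ?_
            rw [natRad_sq Y hY_pos.ne']
            exact natRad_le_self hY_pos.ne'
    -- move to the reals
    set u : ℝ := (4 : ℝ) ^ n with hu_def
    have hu_pos : 0 < u := by positivity
    set F : ℝ := (n.factorial : ℝ) with hF_def
    have hF_pos : 0 < F := by
      rw [hF_def]; exact_mod_cast n.factorial_pos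
    set rQ : ℝ := (na : ℝ) * ((m8 : ℝ) * u) * (Y : ℝ) with hrQ_def
    have hrQ_nonneg : 0 ≤ rQ := by positivity
    have h_rad_le : ((R : ℝ)) ^ ((1 : ℝ) + 1/2) ≤ rQ ^ ((1 : ℝ) + 1/2) := by
      apply Real.rpow_le_rpow (by positivity) ?_ (by norm_num)
      have : ((na * (m8 * 4 ^ n) * Y : ℕ) : ℝ) = rQ := by push_cast; ring
      rw [← this]
      exact_mod_cast hQ_bound
    have hb'_le : ((b' : ℝ)) < C * rQ ^ ((1 : ℝ) + 1/2) := by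
      have h1 : ((b' : ℝ)) ≤ max |((a' : ℤ) : ℝ)| (max |((b' : ℤ) : ℝ)| |((c' : ℤ) : ℝ)|) := by
        have : ((b' : ℝ)) ≤ |((b' : ℤ) : ℝ)| := by
          push_cast; exact le_abs_self _
        exact this.trans ((le_max_left _ _).trans (le_max_right _ _))
      calc ((b' : ℝ)) ≤ _ := h1
        _ < C * ((R : ℝ)) ^ ((1 : ℝ) + 1/2) := hmax
        _ ≤ C * rQ ^ ((1 : ℝ) + 1/2) := by
            exact mul_le_mul_of_nonneg_left h_rad_le hC.le
    -- first inequality : m8 * F ≤ na * (C * rQ^{3/2})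
    have h1 : (m8 : ℝ) * F ≤ (na : ℝ) * (C * rQ ^ ((1 : ℝ) + 1/2)) := by
      have hgle : g ≤ na := Nat.le_of_dvd hna_pos ⟨a', ha'⟩
      have hnb : (m8 : ℝ) * F = ((g : ℝ)) * ((b' : ℝ)) := by
        rw [hF_def]
        have h0 : (m8 : ℝ) * (n.factorial : ℝ) = (g : ℝ) * (b' : ℝ) := by
          exact_mod_cast hb'
        linarith
      rw [hnb]
      calc ((g : ℝ)) * ((b' : ℝ)) ≤ (na : ℝ) * ((b' : ℝ)) := by
            apply mul_le_mul_of_nonneg_right _ (by positivity)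
            exact_mod_cast hgle
        _ ≤ (na : ℝ) * (C * rQ ^ ((1 : ℝ) + 1/2)) := by
            exact mul_le_mul_of_nonneg_left hb'_le.le (by positivity)
    -- square it
    have hsq32 : (rQ ^ ((1 : ℝ) + 1/2)) ^ 2 = rQ ^ (3 : ℕ) := by
      rw [← Real.rpow_natCast (rQ ^ ((1 : ℝ) + 1/2)) 2, ← Real.rpow_mul hrQ_nonneg,
        ← Real.rpow_natCast rQ 3]
      norm_num
    have h2 : ((m8 : ℝ) * F) ^ 2 ≤ ((na : ℝ) * C) ^ 2 * rQ ^ (3 : ℕ) := by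
      have := pow_le_pow_left₀ (by positivity) h1 2
      calc ((m8 : ℝ) * F) ^ 2 ≤ ((na : ℝ) * (C * rQ ^ ((1 : ℝ) + 1/2))) ^ 2 := this
        _ = ((na : ℝ) * C) ^ 2 * (rQ ^ ((1 : ℝ) + 1/2)) ^ 2 := by ring
        _ = ((na : ℝ) * C) ^ 2 * rQ ^ (3 : ℕ) := by rw [hsq32]
    -- cancel m8^2 : F^2 ≤ D1 * u^3 * Y^3
    have h4 : F ^ 2 ≤ ((na : ℝ) ^ 5 * C ^ 2 * (m8 : ℝ)) * u ^ 3 * (Y : ℝ) ^ 3 := by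
      have hm8r : (0 : ℝ) < (m8 : ℝ) ^ 2 := by
        have : (0:ℝ) < (m8:ℝ) := by exact_mod_cast hm8_pos
        positivity
      have hexp : ((na : ℝ) * C) ^ 2 * rQ ^ (3 : ℕ) =
          (m8 : ℝ) ^ 2 * (((na : ℝ) ^ 5 * C ^ 2 * (m8 : ℝ)) * u ^ 3 * (Y : ℝ) ^ 3) := by
        rw [hrQ_def]; ring
      have h2' : (m8 : ℝ) ^ 2 * F ^ 2 ≤
          (m8 : ℝ) ^ 2 * (((na : ℝ) ^ 5 * C ^ 2 * (m8 : ℝ)) * u ^ 3 * (Y : ℝ) ^ 3) := by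
        calc (m8 : ℝ) ^ 2 * F ^ 2 = ((m8 : ℝ) * F) ^ 2 := by ring
          _ ≤ ((na : ℝ) * C) ^ 2 * rQ ^ (3 : ℕ) := h2
          _ = _ := hexp
      exact le_of_mul_le_mul_left h2' hm8r
    -- Y^2 ≤ Kc * F
    have h5 : (Y : ℝ) ^ 2 ≤ (Kc : ℝ) * F := by
      have hnat : Y ^ 2 ≤ Kc * n.factorial := by
        rw [← h_eq_nat, hKc_def]
        have : na ≤ na * n.factorial := Nat.le_mul_of_pos_right _ n.factorial_pos
        calc na + m8 * n.factorial ≤ na * n.factorial + m8 * n.factorial := by omega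
          _ = (m8 + na) * n.factorial := by ring
      have := (Nat.cast_le (α := ℝ)).mpr hnat
      push_cast at this
      rw [hF_def]
      linarith
    -- fourth power
    set D1 : ℝ := (na : ℝ) ^ 5 * C ^ 2 * (m8 : ℝ) with hD1_def
    have hD1_pos : 0 < D1 := by
      have h1' : (0:ℝ) < (na : ℝ) := by exact_mod_cast hna_pos
      have h2' : (0:ℝ) < (m8 : ℝ) := by exact_mod_cast hm8_pos
      positivity
    have h6 : F ^ 4 ≤ (D1 ^ 2 * (Kc : ℝ) ^ 3 * u ^ 6) * F ^ 3 := by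
      have hY_nonneg : (0:ℝ) ≤ (Y : ℝ) := by positivity
      have e1 : F ^ 4 = (F ^ 2) ^ 2 := by ring
      have e2 : (F ^ 2) ^ 2 ≤ (D1 * u ^ 3 * (Y : ℝ) ^ 3) ^ 2 :=
        pow_le_pow_left₀ (by positivity) h4 2
      have e3 : (D1 * u ^ 3 * (Y : ℝ) ^ 3) ^ 2 = D1 ^ 2 * u ^ 6 * ((Y : ℝ) ^ 2) ^ 3 := by
        ring
      have e4 : ((Y : ℝ) ^ 2) ^ 3 ≤ ((Kc : ℝ) * F) ^ 3 :=
        pow_le_pow_left₀ (by positivity) h5 3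
      calc F ^ 4 = (F ^ 2) ^ 2 := e1
        _ ≤ (D1 * u ^ 3 * (Y : ℝ) ^ 3) ^ 2 := e2
        _ = D1 ^ 2 * u ^ 6 * ((Y : ℝ) ^ 2) ^ 3 := e3
        _ ≤ D1 ^ 2 * u ^ 6 * ((Kc : ℝ) * F) ^ 3 := by
            exact mul_le_mul_of_nonneg_left e4 (by positivity)
        _ = (D1 ^ 2 * (Kc : ℝ) ^ 3 * u ^ 6) * F ^ 3 := by ring
    have h7 : F ≤ D1 ^ 2 * (Kc : ℝ) ^ 3 * u ^ 6 := by
      have hF3 : (0:ℝ) < F ^ 3 := by positivity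
      have : F * F ^ 3 ≤ (D1 ^ 2 * (Kc : ℝ) ^ 3 * u ^ 6) * F ^ 3 := by
        calc F * F ^ 3 = F ^ 4 := by ring
          _ ≤ _ := h6
      exact le_of_mul_le_mul_right this hF3
    -- conclude
    have hu6 : u ^ 6 = (4096 : ℝ) ^ n := by
      rw [hu_def, ← pow_mul, mul_comm n 6, pow_mul]
      norm_num
    calc (n.factorial : ℝ) = F := by rw [hF_def]
      _ ≤ D1 ^ 2 * (Kc : ℝ) ^ 3 * u ^ 6 := h7
      _ = E * 4096 ^ n := by rw [hu6, hE_def, hD1_def]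
  -- get the threshold N
  obtain ⟨N, hN⟩ := Filter.eventually_atTop.mp
    (FloorSemiring.eventually_mul_pow_lt_factorial_sub E 4096 0)
  -- bound on x for n < N
  set T : ℤ := 8 * (k - 2) * (N.factorial : ℤ) + (k - 4) ^ 2 with hT_def
  have hT_nonneg : 0 ≤ T := by
    have : (1:ℤ) ≤ (N.factorial : ℤ) := by exact_mod_cast N.factorial_pos
    nlinarith [sq_nonneg (k - 4)]
  set M : ℕ := T.toNat + 1 with hM_def
  apply Set.Finite.subset ((Set.finite_Iio N).prod (Set.finite_Iio M))
  rintro ⟨n, x⟩ ⟨hn, hx, heq⟩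
  simp only [Set.mem_prod, Set.mem_Iio]
  have hnN : n < N := by
    by_contra hcon
    push_neg at hcon
    have h1 := hN n hcon
    simp only [Nat.sub_zero] at h1
    have h2 := key n x hn hx heq
    linarith
  constructor
  · exact hnN
  · -- bound x
    have hx2 : (2 : ℤ) ≤ (x : ℤ) := by exact_mod_cast hx
    set y : ℤ := 2 * (k - 2) * (x : ℤ) + (4 - k) with hy_def
    have hy_pos : 0 < y := by
      linarith [mul_le_mul_of_nonneg_left hx2 (show (0:ℤ) ≤ 2 * (k - 2) by linarith)]
    have hxy : (x : ℤ) ≤ y := by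
      linarith [mul_le_mul_of_nonneg_left hx2 (show (0:ℤ) ≤ 2 * k - 5 by linarith)]
    have hy_sq : y ≤ y ^ 2 := by
      linarith [mul_nonneg hy_pos.le (show (0:ℤ) ≤ y - 1 by linarith)]
    have hfact_le : (n.factorial : ℤ) ≤ (N.factorial : ℤ) := by
      exact_mod_cast Nat.factorial_le hnN.le
    have hxT : (x : ℤ) ≤ T := by
      have h1 : y ^ 2 = 8 * (k - 2) * (n.factorial : ℤ) + (k - 4) ^ 2 := by
        rw [hy_def]; exact heq.symm
      have h2 : 8 * (k - 2) * (n.factorial : ℤ) ≤ 8 * (k - 2) * (N.factorial : ℤ) := by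
        apply mul_le_mul_of_nonneg_left hfact_le (by linarith)
      rw [hT_def]
      calc (x : ℤ) ≤ y := hxy
        _ ≤ y ^ 2 := hy_sq
        _ = 8 * (k - 2) * (n.factorial : ℤ) + (k - 4) ^ 2 := h1
        _ ≤ 8 * (k - 2) * (N.factorial : ℤ) + (k - 4) ^ 2 := by linarith
    have : x ≤ T.toNat := (Int.le_toNat hT_nonneg).mpr hxT
    omega
end
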